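/- Let Γ be a group, H a subgroup of finite index, R a ring, and let H₀ = ⋂_{g∈Γ} g H g⁻¹ be the core of H in Γ. Then Moore's condition holds for the triple (Γ,H,R) if and only if it holds for the triple (Γ,H₀,R). Furthermore, if Moore's conjecture holds for the triple (Γ,H₀,R), then Moore's conjecture holds for the triple (Γ,H,R). -/

import Mathlib

open Pointwise

/-- `𝒜` is a strongly `Γ`-graded ring structure on the ring `A`:  `A` is the internal direct
sum of the additive subgroups `𝒜 g` (`g ∈ Γ`), and `A_g · A_h = A_{g·h}` for all `g h : Γ`
(the inclusion `A_g · A_h ⊆ A_{g·h}` is the field `mul_mem`; the reverse inclusion, saying the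
grading is *strong*, is the field `strong`). -/
structure IsStronglyGraded {Γ : Type*} [Group Γ] {A : Type*} [Ring A]
    (𝒜 : Γ → AddSubgroup A) : Prop where
  independent : iSupIndep 𝒜
  iSup_eq_top : ⨆ g, 𝒜 g = ⊤
  one_mem : (1 : A) ∈ 𝒜 1
  mul_mem : ∀ {g h : Γ} {a b : A}, a ∈ 𝒜 g → b ∈ 𝒜 h → a * b ∈ 𝒜 (g * h)
  strong : ∀ g h : Γ, (𝒜 (g * h) : Set A) ⊆
    (AddSubgroup.closure ((𝒜 g : Set A) * (𝒜 h : Set A)) : Set A)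

/-- For a subgroup `U ≤ Γ`, the subring `A(U) = ⊕_{u ∈ U} A_u` of `A`.  (For a graded ring, the
additive subgroup `⊕_{u ∈ U} A_u` is a subring, and it coincides with the subring of `A`
generated by the pieces `𝒜 u`, `u ∈ U`, which is how we realize it here.)  Every `A`-module is
a module over this subring by restriction of scalars.  In particular `gradedSubring 𝒜 ⊥` is the
base ring `A_e` of the graded ring. -/
def gradedSubring {Γ : Type*} [Group Γ] {A : Type*} [Ring A]
    (𝒜 : Γ → AddSubgroup A) (U : Subgroup Γ) : Subring A :=
  Subring.closure (⋃ u ∈ U, (𝒜 u : Set A))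

/-- Moore's condition for the triple `(Γ, H, R)`: every nontrivial `x : Γ` either generates a
cyclic subgroup meeting `H` nontrivially, or has finite order invertible in `R`. -/
def MooreCondition {Γ : Type*} [Group Γ] (H : Subgroup Γ) (R : Type*) [Ring R] : Prop :=
  ∀ x : Γ, x ≠ 1 →
    Subgroup.zpowers x ⊓ H ≠ ⊥ ∨ (IsOfFinOrder x ∧ IsUnit ((orderOf x : R)))

/-- Moore's conjecture for the triple `(Γ, H, R)`:  if Moore's condition holds for `(Γ, H, R)`,
then for every strongly `Γ`-graded ring `A` with base ring `R` (i.e. `A_e ≅ R`), every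
`A`-module `M` that is projective over the subring `A(H)` is projective over `A`. -/
def MooreConjectureTriple.{u, v} {Γ : Type*} [Group Γ] (H : Subgroup Γ)
    (R : Type*) [Ring R] : Prop :=
  MooreCondition H R →
    ∀ (A : Type u) [Ring A] (𝒜 : Γ → AddSubgroup A), IsStronglyGraded 𝒜 →
      Nonempty (R ≃+* gradedSubring 𝒜 ⊥) →
      ∀ (M : Type v) [AddCommGroup M] [Module A M],
        Module.Projective (gradedSubring 𝒜 H) M → Module.Projective A M

/-- Moore's conjecture for the pair `(Γ, H)`: it holds for `(Γ, H, R)` for every ring `R`. -/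
def MooreConjecturePair.{u, v, w} {Γ : Type*} [Group Γ] (H : Subgroup Γ) : Prop :=
  ∀ (R : Type w) [Ring R], MooreConjectureTriple.{u, v} H R

/-- Moore's conjecture for the group `Γ`: it holds for the pair `(Γ, H)` for every subgroup
`H` of finite index in `Γ`. -/
def MooreConjectureGroup.{u, v, w} (Γ : Type*) [Group Γ] : Prop :=
  ∀ H : Subgroup Γ, H.FiniteIndex → MooreConjecturePair.{u, v, w} H

/-- The core `H₀ = ⋂_{g ∈ Γ} g H g⁻¹` of a subgroup `H` in `Γ`. -/
def subgroupCore {Γ : Type*} [Group Γ] (H : Subgroup Γ) : Subgroup Γ :=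
  ⨅ g : Γ, H.comap (MulAut.conj g).toMonoidHom

section Lemmas
variable {Γ : Type*} [Group Γ] {A : Type*} [Ring A] {𝒜 : Γ → AddSubgroup A}

theorem mem_gradedSubring_of {U : Subgroup Γ} {g : Γ} (hg : g ∈ U) {a : A} (ha : a ∈ 𝒜 g) :
    a ∈ gradedSubring 𝒜 U :=
  Subring.subset_closure (Set.mem_biUnion hg ha)

/-- homogeneous induction -/
theorem IsStronglyGraded.homog_induction (hA : IsStronglyGraded 𝒜) (p : A → Prop)
    (h0 : p 0) (hadd : ∀ x y, p x → p y → p (x + y))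
    (hhom : ∀ (g : Γ) (a : A), a ∈ 𝒜 g → p a) : ∀ a, p a := by
  intro a
  have ha : a ∈ (⊤ : AddSubgroup A) := trivial
  rw [← hA.iSup_eq_top] at ha
  exact AddSubgroup.iSup_induction 𝒜 (C := p) ha (fun g x hx => hhom g x hx) h0 hadd

/-- dual basis for each g -/
theorem IsStronglyGraded.exists_dual (hA : IsStronglyGraded 𝒜) (g : Γ) :
    ∃ (n : ℕ) (v u : Fin n → A), (∀ i, v i ∈ 𝒜 g⁻¹) ∧ (∀ i, u i ∈ 𝒜 g) ∧
      ∑ i, v i * u i = 1 := by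
  have h1 : (1 : A) ∈ AddSubgroup.closure ((𝒜 g⁻¹ : Set A) * (𝒜 g : Set A)) := by
    apply hA.strong g⁻¹ g
    rw [inv_mul_cancel]
    exact hA.one_mem
  have key : ∀ x ∈ AddSubgroup.closure ((𝒜 g⁻¹ : Set A) * (𝒜 g : Set A)),
      ∃ (n : ℕ) (v u : Fin n → A), (∀ i, v i ∈ 𝒜 g⁻¹) ∧ (∀ i, u i ∈ 𝒜 g) ∧
        ∑ i, v i * u i = x := by
    intro x hx
    induction hx using AddSubgroup.closure_induction with
    | mem x hx =>
      obtain ⟨v, hv, u, hu, rfl⟩ := Set.mem_mul.mp hx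
      exact ⟨1, fun _ => v, fun _ => u, fun _ => hv, fun _ => hu, by simp⟩
    | zero => exact ⟨0, ![], ![], by simp, by simp, by simp⟩
    | add x y hx hy ihx ihy =>
      obtain ⟨n, v, u, hv, hu, hs⟩ := ihx
      obtain ⟨m, v', u', hv', hu', hs'⟩ := ihy
      refine ⟨n + m, Fin.addCases v v', Fin.addCases u u', fun i => ?_, fun i => ?_, ?_⟩
      · induction i using Fin.addCases with
        | left i => simpa using hv i
        | right i => simpa using hv' i
      · induction i using Fin.addCases with
        | left i => simpa using hu i
        | right i => simpa using hu' i
      · rw [Fin.sum_univ_add]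
        simp only [Fin.addCases_left, Fin.addCases_right, hs, hs']
    | neg x hx ihx =>
      obtain ⟨n, v, u, hv, hu, hs⟩ := ihx
      exact ⟨n, fun i => -(v i), u, fun i => (𝒜 g⁻¹).neg_mem (hv i), hu, by
        simp only [neg_mul]
        rw [Finset.sum_neg_distrib, hs]⟩
  exact key 1 h1

end Lemmas

open DirectSum in
theorem IsStronglyGraded.projective_of_le {Γ : Type*} [Group Γ] {A : Type*} [Ring A]
    {𝒜 : Γ → AddSubgroup A} (hA : IsStronglyGraded 𝒜) {N K : Subgroup Γ} (hNK : N ≤ K)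
    (M : Type*) [AddCommGroup M] [Module A M]
    (hM : Module.Projective (gradedSubring 𝒜 K) M) :
    Module.Projective (gradedSubring 𝒜 N) M := by
  classical
  set S := gradedSubring 𝒜 N with hSdef
  set T := gradedSubring 𝒜 K with hTdef
  have hST : S ≤ T := Subring.closure_mono (Set.biUnion_subset_biUnion_left hNK)
  -- the internal decomposition of `A`
  set ℳ : Γ → Submodule ℤ A := fun g => AddSubgroup.toIntSubmodule (𝒜 g) with hℳdef
  have hInd : iSupIndep ℳ := hA.independent.map_orderIso AddSubgroup.toIntSubmodule
  have hSup : ⨆ g, ℳ g = ⊤ := by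
    have := congrArg AddSubgroup.toIntSubmodule hA.iSup_eq_top
    rwa [OrderIso.map_iSup, OrderIso.map_top] at this
  have hInt : DirectSum.IsInternal ℳ :=
    DirectSum.isInternal_submodule_of_iSupIndep_of_iSup_eq_top hInd hSup
  set E := LinearEquiv.ofBijective (DirectSum.coeLinearMap ℳ) hInt with hEdef
  set D := E.symm with hDdef
  have hD1 : ∀ (g : Γ) (a : A) (ha : a ∈ 𝒜 g),
      D a = DirectSum.of (fun g => ℳ g) g ⟨a, ha⟩ := by
    intro g a ha
    rw [hDdef, LinearEquiv.symm_apply_eq]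
    exact (DirectSum.coeLinearMap_of ℳ g ⟨a, ha⟩).symm
  -- choices of dual bases, one for each right coset of `N`
  set mk : Γ → Quotient (QuotientGroup.rightRel N) := Quotient.mk _ with hmkdef
  choose n v u hv hu hvu using fun q : Quotient (QuotientGroup.rightRel N) =>
    hA.exists_dual q.out
  have hcoset : ∀ g : Γ, g * ((mk g).out)⁻¹ ∈ N := by
    intro g
    have h := Quotient.out_eq (mk g)
    exact (QuotientGroup.rightRel_apply).mp (Quotient.exact h)
  have hmem : ∀ (g : Γ) (a : A), a ∈ 𝒜 g → ∀ i, a * v (mk g) i ∈ S := fun g a ha i =>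
    mem_gradedSubring_of (hcoset g) (hA.mul_mem ha (hv _ i))
  -- the building blocks of the splitting map
  set Φ : M → ∀ g : Γ, ℳ g →+ (M →₀ S) := fun m g =>
    { toFun := fun t => ∑ i, Finsupp.single (u (mk g) i • m)
        (⟨(t : A) * v (mk g) i, hmem g t t.2 i⟩ : S)
      map_zero' := by
        refine Finset.sum_eq_zero fun i _ => ?_
        rw [Finsupp.single_eq_zero]
        exact Subtype.ext (by simp)
      map_add' := fun a b => by
        have key : ∀ i : Fin (n (mk g)), Finsupp.single (u (mk g) i • m)
            (⟨((a + b : ℳ g) : A) * v (mk g) i, hmem g _ (a + b).2 i⟩ : S)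
            = Finsupp.single (u (mk g) i • m)
                (⟨(a : A) * v (mk g) i, hmem g _ a.2 i⟩ : S)
              + Finsupp.single (u (mk g) i • m)
                (⟨(b : A) * v (mk g) i, hmem g _ b.2 i⟩ : S) := by
          intro i
          rw [← Finsupp.single_add]
          exact congrArg _ (Subtype.ext (by simp [add_mul]))
        rw [Finset.sum_congr rfl (fun i _ => key i), Finset.sum_add_distrib] } with hΦdef
  set Ψ : M → A →+ (M →₀ S) := fun m =>
    (DFinsupp.sumAddHom (Φ m)).comp D.toLinearMap.toAddMonoidHom with hΨdef
  have hΨ : ∀ (m : M) (g : Γ) (a : A) (ha : a ∈ 𝒜 g), Ψ m a = Φ m g ⟨a, ha⟩ := by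
    intro m g a ha
    show DFinsupp.sumAddHom (Φ m) (D a) = _
    rw [hD1 g a ha]
    exact DFinsupp.sumAddHom_single _ _ _
  -- the total map computation
  have htot : ∀ (m : M) (t : A),
      Finsupp.linearCombination S (id : M → M) (Ψ m t) = t • m := by
    intro m
    refine hA.homog_induction _ ?_ ?_ ?_
    · rw [map_zero, map_zero, zero_smul]
    · intro x y hx hy
      rw [map_add, map_add, hx, hy, add_smul]
    · intro g a ha
      rw [hΨ m g a ha]
      show Finsupp.linearCombination S (id : M → M)
        (∑ i, Finsupp.single (u (mk g) i • m) (⟨a * v (mk g) i, hmem g a ha i⟩ : S)) = a • m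
      rw [map_sum]
      simp only [Finsupp.linearCombination_single, id_eq]
      have he : ∀ i, (⟨a * v (mk g) i, hmem g a ha i⟩ : S) • (u (mk g) i • m)
          = (a * (v (mk g) i * u (mk g) i)) • m := by
        intro i
        rw [Subring.smul_def, smul_smul, mul_assoc]
      simp_rw [he, ← Finset.sum_smul, ← Finset.mul_sum, hvu, mul_one]
  -- semilinearity over S
  have hsmul : ∀ (m : M) (x : A) (hx : x ∈ S) (t : A),
      Ψ m (x * t) = (⟨x, hx⟩ : S) • Ψ m t := by
    intro m x hx
    induction hx using Subring.closure_induction with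
    | mem x hx =>
      obtain ⟨h, hhN, hxh⟩ := Set.mem_iUnion₂.mp hx
      refine hA.homog_induction _ ?_ ?_ ?_
      · rw [mul_zero, map_zero]
        exact (smul_zero _).symm
      · intro a b h1 h2
        rw [mul_add, map_add, map_add, h1, h2, smul_add]
      · intro g a ha
        have hq : mk (h * g) = mk g := by
          refine Quotient.sound (QuotientGroup.rightRel_apply.mpr ?_)
          have : g * (h * g)⁻¹ = h⁻¹ := by group
          rw [this]
          exact N.inv_mem hhN
        have key : ∀ (q q' : Quotient (QuotientGroup.rightRel N)) (_ : q = q')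
            (hx1 : ∀ i, (x * a) * v q i ∈ S) (hx2 : ∀ i, a * v q' i ∈ S) (hxS : x ∈ S),
            (∑ i, Finsupp.single (u q i • m) (⟨(x * a) * v q i, hx1 i⟩ : S))
              = (⟨x, hxS⟩ : S) • ∑ i, Finsupp.single (u q' i • m)
                  (⟨a * v q' i, hx2 i⟩ : S) := by
          rintro q q' rfl hx1 hx2 hxS
          rw [Finset.smul_sum]
          refine Finset.sum_congr rfl fun i _ => ?_
          rw [Finsupp.smul_single]
          congr 1
          refine Subtype.ext ?_
          show x * a * v q i = x * (a * v q i)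
          rw [mul_assoc]
        rw [hΨ m g a ha, hΨ m (h * g) (x * a) (hA.mul_mem hxh ha)]
        exact key (mk (h * g)) (mk g) hq (fun i => hmem _ _ (hA.mul_mem hxh ha) i)
          (fun i => hmem g a ha i) (Subring.subset_closure hx)
    | zero =>
      intro t
      rw [zero_mul, map_zero]
      exact (zero_smul S (Ψ m t)).symm
    | one =>
      intro t
      rw [one_mul]
      exact (one_smul S (Ψ m t)).symm
    | add x y hx hy ihx ihy =>
      intro t
      rw [add_mul, map_add, ihx t, ihy t]
      exact (add_smul (⟨x, hx⟩ : S) (⟨y, hy⟩ : S) (Ψ m t)).symm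
    | neg x hx ih =>
      intro t
      rw [neg_mul, map_neg, ih t]
      exact (neg_smul (⟨x, hx⟩ : S) (Ψ m t)).symm
    | mul x y hx hy ihx ihy =>
      intro t
      rw [mul_assoc, ihx (y * t), ihy t]
      exact (mul_smul (⟨x, hx⟩ : S) (⟨y, hy⟩ : S) (Ψ m t)).symm
  -- assembling the splitting map for `S`
  obtain ⟨sT, hsT⟩ := Module.projective_def.mp hM
  refine Module.projective_def.mpr ⟨⟨⟨fun x => (sT x).sum fun m t => Ψ m (t : A), ?_⟩, ?_⟩, ?_⟩
  · intro x y
    rw [map_add]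
    exact Finsupp.sum_add_index' (fun m => by rw [ZeroMemClass.coe_zero, map_zero])
      (fun m t1 t2 => by push_cast; rw [map_add])
  · intro s x
    dsimp only [RingHom.id_apply]
    have h1 : s • x = (⟨(s : A), hST s.2⟩ : T) • x := by
      rw [Subring.smul_def, Subring.smul_def]
    rw [h1, map_smul, Finsupp.sum_smul_index'
      (fun m => by rw [ZeroMemClass.coe_zero, map_zero])]
    have h2 : ∀ (m : M) (t : T), Ψ m (((⟨(s : A), hST s.2⟩ : T) • t : T) : A) = s • Ψ m (t : A) := by
      intro m t
      have h3 : (((⟨(s : A), hST s.2⟩ : T) • t : T) : A) = (s : A) * (t : A) := by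
        rw [smul_eq_mul]
        push_cast
        rfl
      rw [h3, hsmul m (s : A) s.2 (t : A), Subtype.coe_eta]
    simp_rw [h2]
    exact (Finsupp.smul_sum).symm
  · intro x
    show Finsupp.linearCombination S (id : M → M) ((sT x).sum fun m t => Ψ m (t : A)) = x
    rw [map_finsuppSum]
    simp_rw [htot]
    have h4 := hsT x
    rw [Finsupp.linearCombination_apply] at h4
    exact h4

theorem subgroupCore_eq_normalCore {Γ : Type*} [Group Γ] (H : Subgroup Γ) :
    subgroupCore H = H.normalCore := by
  ext x
  simp only [subgroupCore, Subgroup.mem_iInf, Subgroup.mem_comap, MulEquiv.coe_toMonoidHom,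
    MulAut.conj_apply]
  rfl

theorem isUnit_natCast_of_forall_prime {R : Type*} [Ring R] :
    ∀ d : ℕ, d ≠ 0 → (∀ p : ℕ, p.Prime → p ∣ d → IsUnit ((p : R))) → IsUnit ((d : R)) := by
  intro d
  induction d using Nat.strong_induction_on with
  | _ d ih =>
    intro hd hp
    rcases eq_or_ne d 1 with rfl | h1
    · simpa using isUnit_one
    · obtain ⟨p, pp, pdvd⟩ := Nat.exists_prime_and_dvd h1
      obtain ⟨m, rfl⟩ := pdvd
      have hm : m ≠ 0 := by rintro rfl; simp at hd
      have hmlt : m < p * m := by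
        calc m = 1 * m := (one_mul m).symm
        _ < p * m := by
          exact Nat.mul_lt_mul_of_lt_of_le pp.one_lt (le_refl m) (Nat.pos_of_ne_zero hm)
      push_cast
      exact (hp p pp (Dvd.intro m rfl)).mul
        (ih m hmlt hm fun q hq hqd => hp q hq (hqd.mul_left p))


/-- **Lemma 2.6.**  Moore's condition holds for the triple `(Γ, H, R)` if and only if it
holds for `(Γ, H₀, R)`, where `H₀` is the core of `H` in `Γ`.  Furthermore, if Moore's
conjecture holds for the triple `(Γ, H₀, R)` then it holds for the triple `(Γ, H, R)`. -/
theorem mooreCondition_core_iff_and_conjecture_of_core.{u, v} {Γ : Type*} [Group Γ]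
    (H : Subgroup Γ) (hH : H.FiniteIndex) (R : Type*) [Ring R] :
    (MooreCondition H R ↔ MooreCondition (subgroupCore H) R) ∧
    (MooreConjectureTriple.{u, v} (subgroupCore H) R →
      MooreConjectureTriple.{u, v} H R) := by
  have hcore_eq : subgroupCore H = H.normalCore := subgroupCore_eq_normalCore H
  have hle : subgroupCore H ≤ H := hcore_eq ▸ H.normalCore_le
  haveI := hH
  haveI hnorm : (subgroupCore H).Normal := by rw [hcore_eq]; infer_instance
  haveI hfi : (subgroupCore H).FiniteIndex := by rw [hcore_eq]; infer_instance
  have hmemcore : ∀ y : Γ, (∀ g : Γ, g * y * g⁻¹ ∈ H) → y ∈ subgroupCore H := by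
    intro y hy
    refine Subgroup.mem_iInf.mpr fun g => Subgroup.mem_comap.mpr ?_
    simpa [MulAut.conj_apply] using hy g
  have hiff : MooreCondition H R ↔ MooreCondition (subgroupCore H) R := by
    constructor
    · intro mc x hx
      by_cases hfin : IsOfFinOrder x
      · by_cases hu : IsUnit ((orderOf x : R))
        · exact Or.inr ⟨hfin, hu⟩
        · have hd : orderOf x ≠ 0 := hfin.orderOf_pos.ne'
          have hnot : ¬ ∀ p : ℕ, p.Prime → p ∣ orderOf x → IsUnit ((p : R)) :=
            fun h => hu (isUnit_natCast_of_forall_prime _ hd h)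
          push_neg at hnot
          obtain ⟨p, pp, pdvd, hpu⟩ := hnot
          set y := x ^ (orderOf x / p) with hy
          have hdp : orderOf x / p ≠ 0 :=
            Nat.div_ne_zero_iff.mpr ⟨pp.ne_zero, Nat.le_of_dvd (Nat.pos_of_ne_zero hd) pdvd⟩
          have hyo : orderOf y = p := by
            rw [hy, orderOf_pow_of_dvd hdp (Nat.div_dvd_of_dvd pdvd), Nat.div_div_self pdvd hd]
          have hymem : ∀ g : Γ, g * y * g⁻¹ ∈ H := by
            intro g
            have hzo : orderOf (g * y * g⁻¹) = p := by
              have h5 := orderOf_injective (MulAut.conj g).toMonoidHom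
                (MulEquiv.injective _) y
              simpa [MulAut.conj_apply, hyo] using h5
            have hz1 : g * y * g⁻¹ ≠ 1 := by
              intro h
              rw [h, orderOf_one] at hzo
              exact pp.ne_one hzo.symm
            rcases mc _ hz1 with hzH | ⟨_, hzu⟩
            · obtain ⟨w, hw, hw1⟩ : ∃ w, w ∈ Subgroup.zpowers (g * y * g⁻¹) ⊓ H ∧ w ≠ 1 := by
                by_contra hcon
                push_neg at hcon
                exact hzH ((Subgroup.eq_bot_iff_forall _).mpr hcon)
              obtain ⟨k, hk⟩ := Subgroup.mem_zpowers_iff.mp hw.1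
              have hpk : ¬ ((p : ℤ) ∣ k) := by
                intro hdvd
                apply hw1
                rw [← hk]
                rw [← hzo] at hdvd
                exact orderOf_dvd_iff_zpow_eq_one.mp hdvd
              have hcop : IsCoprime (p : ℤ) k := by
                have hnc : Nat.Coprime p k.natAbs := (Nat.Prime.coprime_iff_not_dvd pp).mpr
                  fun hdvd => hpk ((Int.natCast_dvd_natCast.mpr hdvd).trans
                    (Int.natAbs_dvd.mpr dvd_rfl))
                rw [Int.isCoprime_iff_gcd_eq_one]
                simpa [Int.gcd] using hnc
              obtain ⟨a, b, hab⟩ := hcop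
              have hzp : (g * y * g⁻¹) ^ (p : ℤ) = 1 := by
                rw [zpow_natCast, ← hzo, pow_orderOf_eq_one]
              have hzw : g * y * g⁻¹ = w ^ b := by
                conv_lhs => rw [← zpow_one (g * y * g⁻¹), ← hab]
                rw [zpow_add, mul_comm a, mul_comm b, zpow_mul, zpow_mul, hzp, one_zpow,
                  one_mul, hk]
              rw [hzw]
              exact Subgroup.zpow_mem H hw.2 b
            · rw [hzo] at hzu
              exact absurd hzu hpu
          have hy1 : y ≠ 1 := by
            intro h
            rw [h, orderOf_one] at hyo
            exact pp.ne_one hyo.symm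
          refine Or.inl fun hbot => ?_
          have hmem : y ∈ Subgroup.zpowers x ⊓ subgroupCore H :=
            ⟨Subgroup.mem_zpowers_iff.mpr ⟨((orderOf x / p : ℕ) : ℤ), by rw [zpow_natCast]⟩,
              hmemcore y hymem⟩
          rw [hbot] at hmem
          exact hy1 (Subgroup.mem_bot.mp hmem)
      · refine Or.inl fun hbot => ?_
        have hk := (subgroupCore H).pow_index_mem x
        have hx1 : x ^ (subgroupCore H).index ≠ 1 := fun h =>
          hfin (isOfFinOrder_iff_pow_eq_one.mpr
            ⟨(subgroupCore H).index, Nat.pos_of_ne_zero hfi.index_ne_zero, h⟩)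
        have hmem : x ^ (subgroupCore H).index ∈ Subgroup.zpowers x ⊓ subgroupCore H :=
          ⟨Subgroup.mem_zpowers_iff.mpr ⟨(((subgroupCore H).index : ℕ) : ℤ), by
            rw [zpow_natCast]⟩, hk⟩
        rw [hbot] at hmem
        exact hx1 (Subgroup.mem_bot.mp hmem)
    · intro mc x hx
      rcases mc x hx with h | h
      · refine Or.inl fun hbot => ?_
        apply h
        rw [eq_bot_iff] at hbot ⊢
        exact le_trans (inf_le_inf_left _ hle) hbot
      · exact Or.inr h
  refine ⟨hiff, fun hconj => ?_⟩
  intro mc A _ 𝒜 hSG hbase M _ _ hproj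
  exact hconj (hiff.mp mc) A 𝒜 hSG hbase M (hSG.projective_of_le hle M hproj)
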